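/- arXiv:2205.07165 — 6 statements merged into one kernel-verified Lean document; each statement's English description precedes it below -/
import Mathlib

section
/- Let q be a prime power. Let ε_1, …, ε_n be pairwise distinct elements of F_q^× and for each i let γ_i be an element of the algebraic closure of F_q with γ_i^{q−1} = ε_i. Then γ_1, …, γ_n are linearly independent over F_q. -/
/-- Let `q` be a prime power, `ε_1, …, ε_n` pairwise distinct elements of `F_q^×`,
and `γ_i` elements of the algebraic closure of `F_q` with `γ_i ^ (q-1) = ε_i`.
Then `γ_1, …, γ_n` are linearly independent over `F_q`. -/
theorem stmt1 {F : Type*} [Field F] [Fintype F] {n : ℕ}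
    (ε : Fin n → Fˣ) (hinj : Function.Injective ε)
    (γ : Fin n → AlgebraicClosure F)
    (hγ : ∀ i, γ i ^ (Fintype.card F - 1) =
      algebraMap F (AlgebraicClosure F) ((ε i : F))) :
    LinearIndependent F γ := by
  obtain ⟨p, _inst⟩ := CharP.exists F
  obtain ⟨k, hp, hcard⟩ := FiniteField.card F p
  haveI : Fact p.Prime := ⟨hp⟩
  haveI : CharP (AlgebraicClosure F) p :=
    charP_of_injective_algebraMap (algebraMap F (AlgebraicClosure F)).injective p
  -- the Frobenius x ↦ x ^ q as an F-linear endomorphism of the algebraic closure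
  let f : Module.End F (AlgebraicClosure F) :=
  { toFun := fun x => x ^ Fintype.card F
    map_add' := fun x y => by
      simp only [hcard]
      apply add_pow_char_pow
    map_smul' := fun a x => by
      simp only [Algebra.smul_def, mul_pow, RingHom.id_apply]
      congr 1
      rw [← map_pow, FiniteField.pow_card] }
  have hq1 : Fintype.card F - 1 + 1 = Fintype.card F :=
    Nat.succ_pred_eq_of_pos Fintype.card_pos
  have key : ∀ i, f.HasEigenvector ((ε i : F)) (γ i) := by
    intro i
    have hne : γ i ≠ 0 := by
      intro h
      have h2 := hγ i
      rw [h, zero_pow (Nat.sub_ne_zero_of_lt Fintype.one_lt_card)] at h2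
      exact (ε i).ne_zero ((algebraMap F (AlgebraicClosure F)).injective
        (by simpa using h2.symm))
    refine ⟨Module.End.mem_eigenspace_iff.mpr ?_, hne⟩
    show γ i ^ Fintype.card F = (ε i : F) • γ i
    rw [← hq1, pow_succ, hγ i, Algebra.smul_def, mul_comm]
  exact Module.End.eigenvectors_linearIndependent' f (fun i => ((ε i : F)))
    (fun i j h => hinj (Units.ext h)) γ key
end

section
/- Fix an integer q ≥ 2 and a weight w ≥ 1. Let J_w be the set of tuples (s_1,…,s_n) of positive integers with s_1+⋯+s_n = w, s_i ≤ q for i < n and s_n < q, and let J'_w be the set of tuples (s_1,…,s_n) of positive integers with s_1+⋯+s_n = w and q ∤ s_i for all i. Then the map sending (s_1,…,s_n) ∈ J'_w, where s_i = h_i q + r_i with 0 < r_i < q, to the tuple (q,…,q, r_1, q,…,q, r_2, …, q,…,q, r_n) (with h_i copies of q preceding each r_i) is a bijection from J'_w onto J_w. -/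
private def Fm (q : ℕ) (l : List ℕ) : List ℕ :=
  l.flatMap fun s => List.replicate (s / q) q ++ [s % q]

private lemma Fm_nil (q : ℕ) : Fm q [] = [] := rfl

private lemma Fm_cons (q a : ℕ) (l : List ℕ) :
    Fm q (a :: l) = (List.replicate (a / q) q ++ [a % q]) ++ Fm q l := by
  simp [Fm]

private lemma Fm_ne_nil (q : ℕ) (l : List ℕ) (h : l ≠ []) : Fm q l ≠ [] := by
  cases l with
  | nil => exact absurd rfl h
  | cons a t => simp [Fm_cons]

private lemma Fm_sum (q : ℕ) (l : List ℕ) : (Fm q l).sum = l.sum := by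
  induction l with
  | nil => rfl
  | cons a t ih =>
    have h := Nat.div_add_mod' a q
    simp [Fm_cons, List.sum_append, List.sum_replicate, smul_eq_mul, ih]
    omega

private lemma rep_cancel (q : ℕ) : ∀ (m n x y : ℕ) (A B : List ℕ), x < q → y < q →
    List.replicate m q ++ x :: A = List.replicate n q ++ y :: B → m = n ∧ x = y ∧ A = B := by
  intro m
  induction m with
  | zero =>
    intro n x y A B hx hy h
    cases n with
    | zero => simpa using h
    | succ n =>
      simp only [List.replicate_succ, List.replicate, List.nil_append, List.cons_append,
        List.cons.injEq] at h
      omega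
  | succ m ih =>
    intro n x y A B hx hy h
    cases n with
    | zero =>
      simp only [List.replicate_succ, List.replicate, List.nil_append, List.cons_append,
        List.cons.injEq] at h
      omega
    | succ n =>
      simp only [List.replicate_succ, List.cons_append, List.cons.injEq] at h
      obtain ⟨m_eq, x_eq, A_eq⟩ := ih n x y A B hx hy h.2
      exact ⟨by omega, x_eq, A_eq⟩

private lemma Fm_inj (q : ℕ) (hq : 0 < q) : ∀ l₁ l₂ : List ℕ, Fm q l₁ = Fm q l₂ → l₁ = l₂ := by
  intro l₁
  induction l₁ with
  | nil =>
    intro l₂ h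
    cases l₂ with
    | nil => rfl
    | cons b m => exact absurd h.symm (Fm_ne_nil q _ (by simp))
  | cons a t ih =>
    intro l₂ h
    cases l₂ with
    | nil => exact absurd h (Fm_ne_nil q _ (by simp))
    | cons b m =>
      rw [Fm_cons, Fm_cons, List.append_assoc, List.append_assoc,
        List.singleton_append, List.singleton_append] at h
      obtain ⟨hd, hm, hr⟩ := rep_cancel q _ _ _ _ _ _
        (Nat.mod_lt a hq) (Nat.mod_lt b hq) h
      have hab : a = b := by
        have h1 := Nat.div_add_mod a q
        have h2 := Nat.div_add_mod b q
        rw [hd, hm] at h1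
        omega
      rw [hab, ih m hr]

private lemma Fm_getLast (q : ℕ) (hq : 0 < q) : ∀ l : List ℕ, l ≠ [] →
    ∀ x ∈ (Fm q l).getLast?, x < q := by
  intro l
  induction l with
  | nil => intro h; exact absurd rfl h
  | cons a t ih =>
    intro _ x hx
    rw [Fm_cons] at hx
    cases t with
    | nil =>
      rw [Fm_nil, List.append_nil, List.getLast?_concat] at hx
      simp at hx
      subst hx
      exact Nat.mod_lt a hq
    | cons b t' =>
      rw [List.getLast?_append_of_ne_nil _ (Fm_ne_nil q (b :: t') (by simp))] at hx
      exact ih (by simp) x hx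

private lemma surj_aux (q : ℕ) (hq : 2 ≤ q) : ∀ l : List ℕ, l ≠ [] → (∀ x ∈ l, 0 < x) →
    (∀ x ∈ l.dropLast, x ≤ q) → (∀ x ∈ l.getLast?, x < q) →
    ∃ m : List ℕ, m ≠ [] ∧ (∀ x ∈ m, 0 < x) ∧ (∀ x ∈ m, ¬ q ∣ x) ∧ m.sum = l.sum ∧ Fm q m = l := by
  intro l
  induction l with
  | nil => intro h; exact absurd rfl h
  | cons a t ih =>
    intro _ hpos hdrop hlast
    cases t with
    | nil =>
      have ha : a < q := by have := hlast a; simp at this; exact this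
      have ha0 : 0 < a := hpos a (by simp)
      refine ⟨[a], by simp, by simpa using ha0, ?_, by simp, ?_⟩
      · intro x hx
        simp at hx
        subst hx
        exact fun hd => absurd (Nat.le_of_dvd ha0 hd) (by omega)
      · simp [Fm, Nat.div_eq_of_lt ha, Nat.mod_eq_of_lt ha]
    | cons b t' =>
      have htne : (b :: t') ≠ [] := by simp
      have hdt : ∀ x ∈ (b :: t').dropLast, x ≤ q := by
        intro x hx
        apply hdrop
        rw [List.dropLast_cons_of_ne_nil htne]
        exact List.mem_cons_of_mem _ hx
      have hlt : ∀ x ∈ (b :: t').getLast?, x < q := by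
        intro x hx
        apply hlast
        rwa [List.getLast?_cons_cons]
      obtain ⟨m, hmne, hmpos, hmdvd, hmsum, hmF⟩ :=
        ih (by simp) (fun x hx => hpos x (List.mem_cons_of_mem _ hx)) hdt hlt
      have haq : a ≤ q := by
        apply hdrop
        rw [List.dropLast_cons_of_ne_nil htne]
        simp
      by_cases hcase : a = q
      · cases m with
        | nil => exact absurd rfl hmne
        | cons s ms =>
          refine ⟨(s + q) :: ms, by simp, ?_, ?_, ?_, ?_⟩
          · intro x hx
            rcases List.mem_cons.1 hx with h | h
            · omega
            · exact hmpos x (List.mem_cons_of_mem _ h)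
          · intro x hx
            rcases List.mem_cons.1 hx with h | h
            · subst h
              intro hd
              exact hmdvd s (by simp) (by
                have := Nat.dvd_sub hd (dvd_refl q)
                simpa using this)
            · exact hmdvd x (List.mem_cons_of_mem _ h)
          · simp [List.sum_cons] at hmsum ⊢
            omega
          · rw [Fm_cons]
            rw [Fm_cons] at hmF
            have hdiv : (s + q) / q = s / q + 1 := by
              rw [Nat.add_div_right _ (by omega)]
            have hmod : (s + q) % q = s % q := Nat.add_mod_right s q
            rw [hdiv, hmod, List.replicate_succ, hcase]
            simp only [List.cons_append]
            rw [hmF]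
      · have halt : a < q := lt_of_le_of_ne haq hcase
        have ha0 : 0 < a := hpos a (by simp)
        refine ⟨a :: m, by simp, ?_, ?_, ?_, ?_⟩
        · intro x hx
          rcases List.mem_cons.1 hx with h | h
          · omega
          · exact hmpos x h
        · intro x hx
          rcases List.mem_cons.1 hx with h | h
          · subst h
            exact fun hd => absurd (Nat.le_of_dvd ha0 hd) (by omega)
          · exact hmdvd x h
        · simp [List.sum_cons, hmsum]
        · rw [Fm_cons, Nat.div_eq_of_lt halt, Nat.mod_eq_of_lt halt, hmF]
          simp

/-- Fix `q ≥ 2` and `w ≥ 1`.  The map sending a tuple `(s_1, …, s_n)` of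
positive integers of weight `w` with `q ∤ s_i` (writing `s_i = h_i q + r_i`
with `0 < r_i < q`, i.e. `h_i = s_i / q`, `r_i = s_i % q`) to the tuple
`(q, …, q, r_1, …, q, …, q, r_n)` (with `h_i` copies of `q` preceding each
`r_i`) is a bijection from `J'_w` onto `J_w`, where `J_w` is the set of tuples
of positive integers of weight `w` with all entries but the last `≤ q` and the
last `< q`. -/
theorem stmt4 (q w : ℕ) (hq : 2 ≤ q) (hw : 1 ≤ w) :
    Set.BijOn
      (fun l : List ℕ => l.flatMap fun s => List.replicate (s / q) q ++ [s % q])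
      {l : List ℕ | l ≠ [] ∧ (∀ x ∈ l, 0 < x) ∧ l.sum = w ∧ ∀ x ∈ l, ¬ q ∣ x}
      {l : List ℕ | l ≠ [] ∧ (∀ x ∈ l, 0 < x) ∧ l.sum = w ∧
        (∀ x ∈ l.dropLast, x ≤ q) ∧ (∀ x ∈ l.getLast?, x < q)} := by
  have hq0 : 0 < q := by omega
  refine ⟨?_, ?_, ?_⟩
  · intro l hl
    obtain ⟨hne, hpos, hsum, hdvd⟩ := hl
    have hbeta : (fun l : List ℕ => l.flatMap fun s => List.replicate (s / q) q ++ [s % q]) l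
        = Fm q l := rfl
    rw [Set.mem_setOf_eq, hbeta]
    refine ⟨Fm_ne_nil q l hne, ?_, by rw [Fm_sum, hsum], ?_, Fm_getLast q hq0 l hne⟩
    · intro x hx
      simp only [Fm, List.mem_flatMap, List.mem_append, List.mem_replicate,
        List.mem_singleton] at hx
      obtain ⟨s, hs, hx⟩ := hx
      rcases hx with ⟨_, rfl⟩ | rfl
      · omega
      · have h1 : ¬ q ∣ s := hdvd s hs
        have h2 : s % q ≠ 0 := fun h => h1 (Nat.dvd_of_mod_eq_zero h)
        omega
    · intro x hx
      have hx' : x ∈ Fm q l := List.dropLast_subset _ hx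
      simp only [Fm, List.mem_flatMap, List.mem_append, List.mem_replicate,
        List.mem_singleton] at hx'
      obtain ⟨s, hs, hx'⟩ := hx'
      rcases hx' with ⟨_, rfl⟩ | rfl
      · exact le_rfl
      · exact le_of_lt (Nat.mod_lt s hq0)
  · intro l₁ h₁ l₂ h₂ h
    exact Fm_inj q hq0 l₁ l₂ h
  · rintro l ⟨hne, hpos, hsum, hdrop, hlast⟩
    obtain ⟨m, hmne, hmpos, hmdvd, hmsum, hmF⟩ := surj_aux q hq l hne hpos hdrop hlast
    exact ⟨m, ⟨hmne, hmpos, by rw [hmsum, hsum], hmdvd⟩, hmF⟩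
end

section
/- Define s: ℕ → ℕ by s(w) = (q−1)q^{w−1} for 1 ≤ w < q, s(q) = (q−1)(q^{q−1}−1), and s(w) = (q−1)(s(w−1)+⋯+s(w−q+1)) + s(w−q) for w > q (with s(0)=1 by convention in the recursion). Then s(w) equals the number of pairs ((s_1,…,s_n),(ε_1,…,ε_n)) where (s_1,…,s_n) is a tuple of positive integers of weight w with q ∤ s_i for all i, and each ε_i ∈ F_q^×. -/
/-!
Splitting off the first part `a` together with its sign shows that the number `c w` of signed
compositions satisfies `c 0 = 1` and `c w = (q - 1) * ∑_{1 ≤ a ≤ w, q ∤ a} c (w - a)`.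
For `w < q` every `a ≤ w` is admissible, so the prefix sums `∑_{j ≤ w} c j` are `q ^ w`; this gives
the closed forms for `w < q` and `w = q`. For `w ≥ q` the admissible parts are `1, …, q - 1`
together with the shifts by `q` of the parts admissible for `w - q`, so for `w > q` the second
group contributes exactly `c (w - q)`. The resulting recursion determines `s` on positive integers.
-/

open Finset

def signedCompositions (P : ℕ → Prop) (α : Type*) (w : ℕ) : Set (List ℕ × List α) :=
  {p | p.2.length = p.1.length ∧ (∀ x ∈ p.1, 0 < x ∧ P x) ∧ p.1.sum = w}

section SignedCompositions

variable {P : ℕ → Prop} {α : Type*}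

lemma signedCompositions_zero : signedCompositions P α 0 = {([], [])} := by
  ext ⟨l, m⟩
  simp only [signedCompositions, Set.mem_ofPred_eq, Set.mem_singleton_iff, Prod.mk.injEq]
  constructor
  · rintro ⟨hlen, hpos, hsum⟩
    obtain rfl : l = [] := List.eq_nil_iff_forall_not_mem.mpr fun x hx =>
      (hpos x hx).1.ne' (List.sum_eq_zero_iff.mp hsum x hx)
    exact ⟨rfl, List.length_eq_zero_iff.mp hlen⟩
  · rintro ⟨rfl, rfl⟩
    simp

lemma cons_mem_signedCompositions {a w : ℕ} {e : α} {l : List ℕ} {m : List α} :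
    (a :: l, e :: m) ∈ signedCompositions P α w ↔
      (0 < a ∧ P a) ∧ a ≤ w ∧ (l, m) ∈ signedCompositions P α (w - a) := by
  simp only [signedCompositions, Set.mem_ofPred_eq, List.length_cons, List.forall_mem_cons,
    List.sum_cons, Nat.add_right_cancel_iff]
  constructor
  · rintro ⟨hlen, ⟨ha, hl⟩, hsum⟩
    exact ⟨ha, by omega, hlen, hl, by omega⟩
  · rintro ⟨ha, haw, hlen, hl, hsum⟩
    exact ⟨hlen, ⟨ha, hl⟩, by omega⟩

lemma signedCompositions_eq_biUnion [DecidablePred P] [Fintype α] {w : ℕ} (hw : 0 < w) :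
    signedCompositions P α w = ⋃ x ∈ ({a ∈ Icc 1 w | P a} ×ˢ univ : Finset (ℕ × α)),
      Prod.map (x.1 :: ·) (x.2 :: ·) '' signedCompositions P α (w - x.1) := by
  ext ⟨l, m⟩
  simp only [Set.mem_iUnion, Set.mem_image, Prod.exists, Prod.map, Prod.mk.injEq, exists_prop,
    mem_product, mem_filter, mem_Icc, mem_univ, and_true]
  constructor
  · intro h
    match l, m, h with
    | [], _, h => exact absurd h.2.2 (by rw [List.sum_nil]; omega)
    | _ :: _, [], h => exact absurd h.1 (by simp)
    | a :: l, e :: m, h =>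
      obtain ⟨ha, haw, hrest⟩ := cons_mem_signedCompositions.mp h
      exact ⟨a, e, ⟨⟨ha.1, haw⟩, ha.2⟩, l, m, hrest, rfl, rfl⟩
  · rintro ⟨a, e, ⟨⟨ha, haw⟩, hPa⟩, l, m, hrest, rfl, rfl⟩
    exact cons_mem_signedCompositions.mpr ⟨⟨ha, hPa⟩, haw, hrest⟩

lemma signedCompositions_finite [Finite α] (w : ℕ) : (signedCompositions P α w).Finite := by
  classical
  cases nonempty_fintype α
  induction w using Nat.strong_induction_on with
  | _ w ih =>
    rcases Nat.eq_zero_or_pos w with rfl | hw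
    · simp [signedCompositions_zero]
    · rw [signedCompositions_eq_biUnion hw]
      refine (finite_toSet _).biUnion fun x hx => (ih _ ?_).image _
      simp only [mem_coe, mem_product, mem_filter, mem_Icc] at hx
      omega

lemma ncard_signedCompositions [DecidablePred P] [Fintype α] {w : ℕ} (hw : 0 < w) :
    (signedCompositions P α w).ncard =
      Fintype.card α * ∑ a ∈ Icc 1 w with P a, (signedCompositions P α (w - a)).ncard := by
  have hinj (a : ℕ) (e : α) : Function.Injective (Prod.map (a :: ·) (e :: ·)) :=
    List.cons_injective.prodMap List.cons_injective
  have hdisj : (↑({a ∈ Icc 1 w | P a} ×ˢ univ : Finset (ℕ × α)) : Set (ℕ × α)).PairwiseDisjoint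
      fun x => Prod.map (x.1 :: ·) (x.2 :: ·) '' signedCompositions P α (w - x.1) := by
    rintro ⟨a, e⟩ - ⟨b, f⟩ - hne
    refine Set.disjoint_left.mpr ?_
    rintro _ ⟨p, -, rfl⟩ ⟨p', -, heq⟩
    simp only [Prod.map, Prod.mk.injEq, List.cons.injEq] at heq
    exact hne (Prod.ext heq.1.1 heq.2.1).symm
  rw [signedCompositions_eq_biUnion hw, ← set_biUnion_coe, (finite_toSet _).ncard_biUnion
    (fun _ _ => (signedCompositions_finite _).image _) hdisj, finsum_mem_coe_finset, sum_product,
    mul_sum]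
  refine sum_congr rfl fun a _ => ?_
  simp only [Set.ncard_image_of_injective _ (hinj a _), sum_const, card_univ, smul_eq_mul]

lemma signedCompositions_eq_setOf_ne_nil {w : ℕ} (hw : 0 < w) :
    signedCompositions P α w = {p : List ℕ × List α | p.1 ≠ [] ∧ p.2.length = p.1.length ∧
      (∀ x ∈ p.1, 0 < x) ∧ p.1.sum = w ∧ ∀ x ∈ p.1, P x} := by
  ext ⟨l, m⟩
  simp only [signedCompositions, Set.mem_ofPred_eq, forall_and]
  refine ⟨fun ⟨hlen, ⟨hpos, hP⟩, hsum⟩ => ⟨?_, hlen, hpos, hsum, hP⟩,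
    fun ⟨_, hlen, hpos, hsum, hP⟩ => ⟨hlen, ⟨hpos, hP⟩, hsum⟩⟩
  rintro rfl
  rw [List.sum_nil] at hsum
  omega

end SignedCompositions

lemma sum_Icc_one_sub_eq_sum_range {M : Type*} [AddCommMonoid M] (f : ℕ → M) (n : ℕ) :
    ∑ a ∈ Icc 1 n, f (n - a) = ∑ j ∈ range n, f j := by
  rw [← Ico_add_one_right_eq_Icc, sum_Ico_reflect _ _ le_rfl, Nat.add_sub_cancel, Nat.sub_self,
    range_eq_Ico]

lemma filter_not_dvd_Icc_eq_union {q w : ℕ} (hqw : q ≤ w) :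
    {a ∈ Icc 1 w | ¬ q ∣ a} =
      Icc 1 (q - 1) ∪ {b ∈ Icc 1 (w - q) | ¬ q ∣ b}.map (addRightEmbedding q) := by
  ext a
  simp only [mem_union, mem_filter, mem_Icc, mem_map, addRightEmbedding_apply]
  constructor
  · rintro ⟨ha, hqa⟩
    rcases lt_or_ge a q with haq | hqa'
    · exact Or.inl (by omega)
    · have hne : a ≠ q := by rintro rfl; exact hqa dvd_rfl
      exact Or.inr ⟨a - q, ⟨by omega, fun h => (Nat.dvd_sub_self_right.mp h).elim hqa (by omega)⟩,
        by omega⟩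
  · rintro (ha | ⟨b, ⟨hb, hqb⟩, rfl⟩)
    · exact ⟨by omega, Nat.not_dvd_of_pos_of_lt (by omega) (by omega)⟩
    · exact ⟨by omega, by rwa [Nat.dvd_add_self_right]⟩

lemma sum_filter_not_dvd_Icc_sub_of_le {M : Type*} [AddCommMonoid M] (f : ℕ → M) {q w : ℕ}
    (hqw : q ≤ w) :
    ∑ a ∈ Icc 1 w with ¬ q ∣ a, f (w - a) =
      ∑ i ∈ Icc 1 (q - 1), f (w - i) + ∑ b ∈ Icc 1 (w - q) with ¬ q ∣ b, f (w - q - b) := by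
  rw [filter_not_dvd_Icc_eq_union hqw, sum_union, sum_map]
  · refine congrArg _ (sum_congr rfl fun b _ => ?_)
    rw [Nat.sub_sub, Nat.add_comm q, addRightEmbedding_apply]
  · refine disjoint_left.mpr fun a ha hb => ?_
    simp only [mem_Icc, mem_map, mem_filter, addRightEmbedding_apply] at ha hb
    omega

def FirstPartRecurrence (q : ℕ) (c : ℕ → ℕ) : Prop :=
  ∀ w, 0 < w → c w = (q - 1) * ∑ a ∈ Icc 1 w with ¬ q ∣ a, c (w - a)

def SRecurrence (q : ℕ) (s : ℕ → ℕ) : Prop :=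
  (∀ w, 1 ≤ w → w < q → s w = (q - 1) * q ^ (w - 1)) ∧ s q = (q - 1) * (q ^ (q - 1) - 1) ∧
    ∀ w, q < w → s w = (q - 1) * ∑ i ∈ Icc 1 (q - 1), s (w - i) + s (w - q)

theorem SRecurrence.eq_of_pos {q : ℕ} {s t : ℕ → ℕ} (hq : 0 < q) (hs : SRecurrence q s)
    (ht : SRecurrence q t) (w : ℕ) (hw : 0 < w) : s w = t w := by
  induction w using Nat.strong_induction_on with
  | _ w ih =>
    obtain ⟨hs1, hsq, hsrec⟩ := hs
    obtain ⟨ht1, htq, htrec⟩ := ht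
    rcases lt_trichotomy w q with hwq | rfl | hqw
    · rw [hs1 w hw hwq, ht1 w hw hwq]
    · rw [hsq, htq]
    · rw [hsrec w hqw, htrec w hqw, ih (w - q) (by omega) (by omega),
        sum_congr rfl fun i hi => ih (w - i) (by rw [mem_Icc] at hi; omega)
          (by rw [mem_Icc] at hi; omega)]

namespace FirstPartRecurrence

variable {q : ℕ} {c : ℕ → ℕ}

theorem eq_mul_sum_range (hc : FirstPartRecurrence q c) {w : ℕ} (hw : 0 < w) (hwq : w < q) :
    c w = (q - 1) * ∑ j ∈ range w, c j := by
  rw [hc w hw, filter_true_of_mem fun a ha => Nat.not_dvd_of_pos_of_lt (mem_Icc.mp ha).1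
    ((mem_Icc.mp ha).2.trans_lt hwq), sum_Icc_one_sub_eq_sum_range]

theorem sum_range_succ_eq_pow (hc : FirstPartRecurrence q c) (hc0 : c 0 = 1) :
    ∀ w < q, ∑ j ∈ range (w + 1), c j = q ^ w
  | 0, _ => by simp [hc0]
  | w + 1, hwq => by
    rw [sum_range_succ, hc.eq_mul_sum_range w.succ_pos hwq,
      hc.sum_range_succ_eq_pow hc0 w (by omega)]
    obtain ⟨k, rfl⟩ : ∃ k, q = k + 1 := ⟨q - 1, by omega⟩
    simp only [Nat.add_sub_cancel]
    ring

theorem eq_of_lt (hc : FirstPartRecurrence q c) (hc0 : c 0 = 1) {w : ℕ} (hw : 0 < w)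
    (hwq : w < q) : c w = (q - 1) * q ^ (w - 1) := by
  obtain ⟨v, rfl⟩ : ∃ v, w = v + 1 := ⟨w - 1, by omega⟩
  rw [hc.eq_mul_sum_range hw hwq, hc.sum_range_succ_eq_pow hc0 v (by omega), Nat.add_sub_cancel]

theorem eq_self (hc : FirstPartRecurrence q c) (hc0 : c 0 = 1) (hq : 0 < q) :
    c q = (q - 1) * (q ^ (q - 1) - 1) := by
  have hsum : ∑ i ∈ Icc 1 (q - 1), c (q - i) + c 0 = q ^ (q - 1) :=
    calc ∑ i ∈ Icc 1 (q - 1), c (q - i) + c 0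
        = ∑ j ∈ range (q - 1), c (j + 1) + c 0 := by
          rw [← sum_Icc_one_sub_eq_sum_range]
          refine congrArg (· + c 0) (sum_congr rfl fun i hi => congrArg c ?_)
          simp only [mem_Icc] at hi
          omega
      _ = ∑ j ∈ range (q - 1 + 1), c j := (sum_range_succ' _ _).symm
      _ = q ^ (q - 1) := hc.sum_range_succ_eq_pow hc0 _ (by omega)
  rw [hc q hq, sum_filter_not_dvd_Icc_sub_of_le _ le_rfl, Nat.sub_self, Icc_eq_empty_of_lt one_pos,
    filter_empty, sum_empty, add_zero]
  congr 1
  omega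

theorem eq_of_gt (hc : FirstPartRecurrence q c) {w : ℕ} (hqw : q < w) :
    c w = (q - 1) * ∑ i ∈ Icc 1 (q - 1), c (w - i) + c (w - q) := by
  rw [hc w (by omega), sum_filter_not_dvd_Icc_sub_of_le _ hqw.le, mul_add, ← hc (w - q) (by omega)]

theorem sRecurrence (hc : FirstPartRecurrence q c) (hc0 : c 0 = 1) (hq : 0 < q) :
    SRecurrence q c :=
  ⟨fun _ hw hwq => hc.eq_of_lt hc0 hw hwq, hc.eq_self hc0 hq, fun _ hqw => hc.eq_of_gt hqw⟩

end FirstPartRecurrence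

theorem stmt5_general (q : ℕ) (hq : 2 ≤ q) (s : ℕ → ℕ)
    (hs1 : ∀ w, 1 ≤ w → w < q → s w = (q - 1) * q ^ (w - 1))
    (hsq : s q = (q - 1) * (q ^ (q - 1) - 1))
    (hsrec : ∀ w, q < w →
      s w = (q - 1) * ∑ i ∈ Finset.Icc 1 (q - 1), s (w - i) + s (w - q)) :
    ∀ w, 1 ≤ w →
      {p : List ℕ × List (Fin (q - 1)) |
        p.1 ≠ [] ∧ p.2.length = p.1.length ∧ (∀ x ∈ p.1, 0 < x) ∧
        p.1.sum = w ∧ ∀ x ∈ p.1, ¬ q ∣ x}.ncard = s w := by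
  intro w hw
  have hc : FirstPartRecurrence q fun w => (signedCompositions (¬ q ∣ ·) (Fin (q - 1)) w).ncard :=
    fun _ hw => by beta_reduce; rw [ncard_signedCompositions hw, Fintype.card_fin]
  have hc0 : (signedCompositions (¬ q ∣ ·) (Fin (q - 1)) 0).ncard = 1 := by
    rw [signedCompositions_zero, Set.ncard_singleton]
  rw [← signedCompositions_eq_setOf_ne_nil hw]
  exact (hc.sRecurrence hc0 (by omega)).eq_of_pos (by omega) ⟨hs1, hsq, hsrec⟩ w hw

/-- Let `s : ℕ → ℕ` satisfy `s 0 = 1` (convention used in the recursion),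
`s w = (q-1) q^(w-1)` for `1 ≤ w < q`, `s q = (q-1)(q^(q-1) - 1)`, and
`s w = (q-1)(s (w-1) + ⋯ + s (w-q+1)) + s (w-q)` for `w > q`.  Then for every
`w ≥ 1`, `s w` equals the number of pairs `((s_1, …, s_n), (ε_1, …, ε_n))`
where `(s_1, …, s_n)` is a tuple of positive integers of weight `w` with
`q ∤ s_i` for all `i`, and each `ε_i` lies in `F_q^×` (a set with `q - 1`
elements, modelled by `Fin (q-1)`). -/
theorem stmt5 (q : ℕ) (hq : 2 ≤ q) (s : ℕ → ℕ)
    (hs0 : s 0 = 1)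
    (hs1 : ∀ w, 1 ≤ w → w < q → s w = (q - 1) * q ^ (w - 1))
    (hsq : s q = (q - 1) * (q ^ (q - 1) - 1))
    (hsrec : ∀ w, q < w →
      s w = (q - 1) * ∑ i ∈ Finset.Icc 1 (q - 1), s (w - i) + s (w - q)) :
    ∀ w, 1 ≤ w →
      {p : List ℕ × List (Fin (q - 1)) |
        p.1 ≠ [] ∧ p.2.length = p.1.length ∧ (∀ x ∈ p.1, 0 < x) ∧
        p.1.sum = w ∧ ∀ x ∈ p.1, ¬ q ∣ x}.ncard = s w :=
  stmt5_general q hq s hs1 hsq hsrec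
end

section
/- Fix q ≥ 2 and w ≥ 1. The number of arrays ((s_1,…,s_n),(ε_1,…,ε_n)) with s_i positive integers of total weight w satisfying q ∤ s_i for all i, and ε_i ∈ F_q^×, equals the number of arrays ((t_1,…,t_m),(δ_1,…,δ_m)) with t_i positive integers of total weight w satisfying t_i ≤ q for i < m and t_m < q, δ_i ∈ F_q^×, and δ_i = 1 whenever t_i = q. -/
/-!
Encode an array as a list of pairs `(s, ε)`. By division with remainder, a part `(s, ε)` with
`q ∤ s` expands to `s / q` copies of `(q, 1)` followed by `(s % q, ε)`, where `0 < s % q < q`.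
Conversely, since its last part is smaller than `q`, an array on the right-hand side splits
uniquely into maximal runs of `(q, 1)`'s, each closed by a part smaller than `q`, and merging
each run into a single part inverts the expansion. Both maps preserve the weight.
-/

lemma List.forall_mem_dropLast_iff {α : Type*} {p : α → Prop} {l : List α}
    (h : ∀ x ∈ l.getLast?, p x) : (∀ x ∈ l.dropLast, p x) ↔ ∀ x ∈ l, p x := by
  refine ⟨fun hd x hx => ?_, fun hl x hx => hl x (List.dropLast_subset _ hx)⟩
  cases hlast : l.getLast? with
  | none => simp_all
  | some a =>
    rw [← List.dropLast_append_getLast? a hlast, List.mem_append, List.mem_singleton] at hx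
    rcases hx with hx | rfl
    exacts [hd x hx, h x hlast]

namespace ArrayExpansion

variable {E : Type*} (q : ℕ) (one : E)

def expand (l : List (ℕ × E)) : List (ℕ × E) :=
  l.flatMap fun x => List.replicate (x.1 / q) (q, one) ++ [(x.1 % q, x.2)]

def merge : List (ℕ × E) → List (ℕ × E)
  | [] => []
  | x :: t =>
    if x.1 = q then
      match merge t with
      | [] => [x]
      | y :: r => (y.1 + q, y.2) :: r
    else x :: merge t

def IsExpanded (l : List (ℕ × E)) : Prop :=
  (∀ x ∈ l, 0 < x.1 ∧ x.1 ≤ q ∧ (x.1 = q → x.2 = one)) ∧ ∀ x ∈ l.getLast?, x.1 < q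

variable {q one}

@[simp]
lemma expand_nil : expand q one [] = [] := rfl

lemma expand_cons (x : ℕ × E) (l : List (ℕ × E)) :
    expand q one (x :: l) =
      List.replicate (x.1 / q) (q, one) ++ (x.1 % q, x.2) :: expand q one l := by
  simp [expand]

lemma expand_ne_nil {l : List (ℕ × E)} (h : l ≠ []) : expand q one l ≠ [] := by
  obtain ⟨x, l, rfl⟩ := List.exists_cons_of_ne_nil h
  simp [expand_cons]

lemma sum_map_fst_expand (l : List (ℕ × E)) :
    ((expand q one l).map Prod.fst).sum = (l.map Prod.fst).sum := by
  induction l with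
  | nil => rfl
  | cons x l ih =>
    simp only [expand_cons, List.map_append, List.sum_append, List.map_cons, List.sum_cons,
      List.map_replicate, List.sum_replicate, smul_eq_mul, ih]
    rw [← add_assoc, Nat.div_add_mod']

lemma getLast?_expand (l : List (ℕ × E)) :
    (expand q one l).getLast? = l.getLast?.map fun x => (x.1 % q, x.2) := by
  induction l using List.reverseRecOn with
  | nil => rfl
  | append_singleton l x _ => simp [expand, List.getLast?_append]

lemma merge_cons_of_ne {x : ℕ × E} (hx : x.1 ≠ q) (t : List (ℕ × E)) :
    merge q (x :: t) = x :: merge q t := by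
  simp [merge, hx]

lemma merge_cons_of_eq {x y : ℕ × E} (hx : x.1 = q) {t r : List (ℕ × E)}
    (ht : merge q t = y :: r) : merge q (x :: t) = (y.1 + q, y.2) :: r := by
  simp [merge, hx, ht]

lemma merge_replicate_append {r : ℕ} (hr : r < q) (k : ℕ) (ε : E) (t : List (ℕ × E)) :
    merge q (List.replicate k (q, one) ++ (r, ε) :: t) = (k * q + r, ε) :: merge q t := by
  induction k with
  | zero => simpa using merge_cons_of_ne hr.ne t
  | succ k ih =>
    rw [List.replicate_succ, List.cons_append, merge_cons_of_eq (x := (q, one)) rfl ih]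
    congr 2
    ring

lemma merge_expand (hq : 0 < q) {l : List (ℕ × E)} (hl : ∀ x ∈ l, ¬ q ∣ x.1) :
    merge q (expand q one l) = l := by
  induction l with
  | nil => rfl
  | cons x l ih =>
    rw [expand_cons, merge_replicate_append (Nat.mod_lt _ hq), Nat.div_add_mod',
      ih fun y hy => hl y (List.mem_cons_of_mem _ hy)]

lemma isExpanded_expand (hq : 0 < q) {l : List (ℕ × E)} (hl : ∀ x ∈ l, ¬ q ∣ x.1) :
    IsExpanded q one (expand q one l) := by
  refine ⟨fun y hy => ?_, fun y hy => ?_⟩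
  · obtain ⟨x, hx, hy⟩ := List.mem_flatMap.mp hy
    rcases List.mem_append.mp hy with hy | hy
    · obtain rfl := List.eq_of_mem_replicate hy
      exact ⟨hq, le_rfl, fun _ => rfl⟩
    · obtain rfl := List.mem_singleton.mp hy
      have hpos : 0 < x.1 % q := Nat.pos_of_ne_zero fun h => hl x hx (Nat.dvd_of_mod_eq_zero h)
      have hlt : x.1 % q < q := Nat.mod_lt _ hq
      exact ⟨hpos, hlt.le, fun h => absurd h hlt.ne⟩
  · rw [getLast?_expand, Option.mem_map] at hy
    obtain ⟨x, -, rfl⟩ := hy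
    exact Nat.mod_lt _ hq

/-- A part divisible by `q` would leave a zero part in the expansion. -/
lemma not_dvd_of_expand_pos {l : List (ℕ × E)} (h : ∀ x ∈ expand q one l, 0 < x.1) :
    ∀ x ∈ l, ¬ q ∣ x.1 := by
  intro x hx hdvd
  have hmem : (x.1 % q, x.2) ∈ expand q one l :=
    List.mem_flatMap.mpr ⟨x, hx, by simp⟩
  simpa [Nat.mod_eq_zero_of_dvd hdvd] using h _ hmem

lemma IsExpanded.of_cons {x : ℕ × E} {t : List (ℕ × E)} (h : IsExpanded q one (x :: t)) :
    IsExpanded q one t := by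
  refine ⟨fun y hy => h.1 y (List.mem_cons_of_mem _ hy), fun y hy => ?_⟩
  cases t with
  | nil => simp at hy
  | cons z t => exact h.2 y (by rwa [List.getLast?_cons_cons])

lemma expand_merge (hq : 0 < q) {l : List (ℕ × E)} (hl : IsExpanded q one l) :
    expand q one (merge q l) = l := by
  induction l with
  | nil => rfl
  | cons x t ih =>
    have ht := ih hl.of_cons
    obtain ⟨-, hxq, hxone⟩ := hl.1 x List.mem_cons_self
    by_cases hx : x.1 = q
    · have ht0 : t ≠ [] := by
        rintro rfl
        exact (hl.2 x rfl).ne hx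
      have hmt : merge q t ≠ [] := fun h => ht0 (by rw [← ht, h, expand_nil])
      obtain ⟨y, r, hyr⟩ := List.exists_cons_of_ne_nil hmt
      rw [hyr, expand_cons] at ht
      rw [merge_cons_of_eq hx hyr, expand_cons, Nat.add_div_right _ hq, Nat.add_mod_right,
        List.replicate_succ, List.cons_append, ht, ← hx, ← hxone hx]
    · have hlt : x.1 < q := lt_of_le_of_ne hxq hx
      rw [merge_cons_of_ne hx, expand_cons, Nat.div_eq_of_lt hlt, Nat.mod_eq_of_lt hlt, ht]
      rfl

lemma isExpanded_iff {l : List (ℕ × E)} : IsExpanded q one l ↔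
    (∀ x ∈ l, 0 < x.1) ∧ (∀ x ∈ (l.map Prod.fst).dropLast, x ≤ q) ∧
      (∀ x ∈ (l.map Prod.fst).getLast?, x < q) ∧ ∀ x ∈ l, x.1 = q → x.2 = one := by
  constructor
  · rintro ⟨h, hlast⟩
    refine ⟨fun x hx => (h x hx).1, ?_, ?_, fun x hx => (h x hx).2.2⟩
    · rw [← List.map_dropLast, List.forall_mem_map]
      exact fun x hx => (h x (List.dropLast_subset _ hx)).2.1
    · rwa [List.getLast?_map, Option.forall_mem_map]
  · rintro ⟨hpos, hle, hlast, hone⟩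
    rw [List.forall_mem_dropLast_iff fun x hx => (hlast x hx).le, List.forall_mem_map] at hle
    rw [List.getLast?_map, Option.forall_mem_map] at hlast
    exact ⟨fun x hx => ⟨hpos x hx, hle x hx, hone x hx⟩, hlast⟩

lemma bijOn_expand (hq : 0 < q) (w : ℕ) :
    Set.BijOn (expand q one)
      {l | l ≠ [] ∧ (l.map Prod.fst).sum = w ∧ ∀ x ∈ l, ¬ q ∣ x.1}
      {l | l ≠ [] ∧ (l.map Prod.fst).sum = w ∧ IsExpanded q one l} := by
  refine Set.InvOn.bijOn (f' := merge q) ⟨fun l hl => merge_expand hq hl.2.2,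
    fun l hl => expand_merge hq hl.2.2⟩ ?_ ?_
  · rintro l ⟨hne, hw, hl⟩
    exact ⟨expand_ne_nil hne, by rw [sum_map_fst_expand, hw], isExpanded_expand hq hl⟩
  · rintro l ⟨hne, hw, hl⟩
    have hinv := expand_merge hq hl
    refine ⟨fun h => hne ?_, ?_, not_dvd_of_expand_pos (one := one) ?_⟩
    · rw [← hinv, h, expand_nil]
    · rw [← sum_map_fst_expand (q := q) (one := one), hinv, hw]
    · exact fun x hx => (hl.1 x (hinv ▸ hx)).1

end ArrayExpansion

lemma Set.ncard_setOf_eq_ncard_setOf_unzip {α β : Type*} {P : List α × List β → Prop}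
    (hP : ∀ p, P p → p.2.length = p.1.length) :
    {p | P p}.ncard = {l : List (α × β) | P l.unzip}.ncard := by
  have hinj : Function.Injective (List.unzip : List (α × β) → List α × List β) :=
    Function.LeftInverse.injective (g := Function.uncurry List.zip) List.zip_unzip
  rw [← Set.ncard_image_of_injective _ hinj]
  congr 1
  ext p
  refine ⟨fun hp => ⟨p.1.zip p.2, ?_, List.unzip_zip (hP p hp).symm⟩, fun ⟨l, hl, hp⟩ => hp ▸ hl⟩
  show P (p.1.zip p.2).unzip
  rwa [List.unzip_zip (hP p hp).symm]

open ArrayExpansion in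
theorem stmt6_general (q w : ℕ) (hq : 2 ≤ q)
    (E : Type*) (one : E) :
    {p : List ℕ × List E |
      p.1 ≠ [] ∧ p.2.length = p.1.length ∧ (∀ x ∈ p.1, 0 < x) ∧
      p.1.sum = w ∧ ∀ x ∈ p.1, ¬ q ∣ x}.ncard =
    {p : List ℕ × List E |
      p.1 ≠ [] ∧ p.2.length = p.1.length ∧ (∀ x ∈ p.1, 0 < x) ∧
      p.1.sum = w ∧ (∀ x ∈ p.1.dropLast, x ≤ q) ∧
      (∀ x ∈ p.1.getLast?, x < q) ∧
      ∀ pr ∈ p.1.zip p.2, pr.1 = q → pr.2 = one}.ncard := by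
  rw [Set.ncard_setOf_eq_ncard_setOf_unzip fun p hp => hp.2.1,
    Set.ncard_setOf_eq_ncard_setOf_unzip fun p hp => hp.2.1]
  convert (bijOn_expand (one := one) (by omega : 0 < q) w).ncard_eq using 2
  · ext l
    simp only [Set.mem_ofPred_eq, List.unzip_fst, List.unzip_snd, List.length_map,
      List.forall_mem_map, ne_eq, List.map_eq_nil_iff, true_and]
    constructor
    · rintro ⟨hne, -, hw, hdvd⟩
      exact ⟨hne, hw, hdvd⟩
    · rintro ⟨hne, hw, hdvd⟩
      exact ⟨hne, fun x hx => Nat.pos_of_ne_zero fun h => hdvd x hx (h ▸ dvd_zero q), hw, hdvd⟩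
  · ext l
    simp only [Set.mem_ofPred_eq, List.zip_unzip]
    simp only [List.unzip_fst, List.unzip_snd, List.length_map, ne_eq, List.map_eq_nil_iff,
      List.forall_mem_map, true_and, isExpanded_iff]
    tauto

/-- Fix `q ≥ 2` and `w ≥ 1`.  Let `E` be a set with `q - 1` elements (modelling
`F_q^×`) with a distinguished element `one`.  The number of arrays
`((s_1, …, s_n), (ε_1, …, ε_n))` of total weight `w` with `q ∤ s_i` and
`ε_i ∈ E` equals the number of arrays `((t_1, …, t_m), (δ_1, …, δ_m))` of
total weight `w` with `t_i ≤ q` for `i < m`, `t_m < q`, `δ_i ∈ E`, and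
`δ_i = one` whenever `t_i = q`. -/
theorem stmt6 (q w : ℕ) (hq : 2 ≤ q) (hw : 1 ≤ w)
    (E : Type*) [Fintype E] (hE : Fintype.card E = q - 1) (one : E) :
    {p : List ℕ × List E |
      p.1 ≠ [] ∧ p.2.length = p.1.length ∧ (∀ x ∈ p.1, 0 < x) ∧
      p.1.sum = w ∧ ∀ x ∈ p.1, ¬ q ∣ x}.ncard =
    {p : List ℕ × List E |
      p.1 ≠ [] ∧ p.2.length = p.1.length ∧ (∀ x ∈ p.1, 0 < x) ∧
      p.1.sum = w ∧ (∀ x ∈ p.1.dropLast, x ≤ q) ∧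
      (∀ x ∈ p.1.getLast?, x < q) ∧
      ∀ pr ∈ p.1.zip p.2, pr.1 = q → pr.2 = one}.ncard :=
  stmt6_general q w hq E one
end

section
/- Let A = F_q[θ] and D_1 = θ^q − θ. For every ε ∈ F_q^× and every d ≥ 0, the power-sum identity S_d(ε; q) + ε^{−1} D_1 S_{d+1}(ε,1; 1, q−1) = 0 holds, where S_d(ε; q) = ∑_{a monic, deg a = d} ε^d a^{−q} and S_{d+1}(ε,1;1,q−1) = ∑ ε^{deg a_1} / (a_1 a_2^{q−1}) over monic a_1, a_2 with d+1 = deg a_1 > deg a_2 ≥ 0. -/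
/-!
For `1 ≤ s ≤ q`, the power sum `∑ a⁻ˢ` over the monic `a` of degree `d` equals `ℓ_d⁻ˢ`. Write
`a = θ^d - b` with `b` in the `F`-space `V_d` of polynomials of degree `< d`. The function
`e_d(y) = ∏_{b ∈ V_d} (y - b)` is `F`-linear with `e_{d+1}(y) = e_d(y)^q - e_d(θ^d)^{q-1} e_d(y)`,
so the rank-one identity `∑_{c ∈ F} (z - c)⁻ˢ = (-(z^q - z)⁻¹)ˢ` gives, by induction on `d`,
`∑_{b ∈ V_d} (y - b)⁻ˢ = (κ_d / e_d(y))ˢ` with `κ_{d+1} = -κ_d e_d(θ^d)^{q-1}`. Evaluating `e_d` at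
`θ^{d+k}` through complete homogeneous polynomials in `θ, θ^q, …, θ^{q^d}` yields
`e_{d+1}(θ^{d+1}) = e_d(θ^d)^q (θ^{q^{d+1}} - θ)`, whence `κ_d / e_d(θ^d) = ℓ_d⁻¹`.

The double sum factors as `S_{d+1}(1) · ∑_{j ≤ d} S_j(q - 1)`, and
`(θ^q - θ) ∑_{j ≤ d} ℓ_j^{1-q} = ℓ_d^{1-q} (θ^{q^{d+1}} - θ)` telescopes since
`(θ - θ^{q^{j+1}})^q = θ^q - θ^{q^{j+2}}`; as `ℓ_{d+1} = ℓ_d (θ - θ^{q^{d+1}})`, the terms cancel.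
-/

open Polynomial

namespace CarlitzPowerSums

lemma finsum_mem_prod_mul {α β R : Type*} [CommSemiring R] {s : Set α} {t : Set β}
    (hs : s.Finite) (ht : t.Finite) (f : α → R) (g : β → R) :
    ∑ᶠ a ∈ s ×ˢ t, f a.1 * g a.2 = (∑ᶠ a ∈ s, f a) * ∑ᶠ b ∈ t, g b := by
  rw [finsum_mem_eq_finite_toFinset_sum _ (hs.prod ht), finsum_mem_eq_finite_toFinset_sum _ hs,
    finsum_mem_eq_finite_toFinset_sum _ ht, ← Set.Finite.toFinset_prod, Finset.sum_mul_sum,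
    Finset.sum_product]

@[to_additive]
lemma prod_pi_fin_succ {F M : Type*} [Fintype F] [CommMonoid M] {d : ℕ}
    (G : (Fin (d + 1) → F) → M) : ∏ b, G b = ∏ c : F, ∏ b : Fin d → F, G (Fin.snoc b c) := by
  rw [← (Fin.snocEquiv fun _ => F).prod_comp, Fintype.prod_prod_type]
  rfl

lemma sum_snoc_smul {F L : Type*} [AddCommMonoid L] [SMul F L] (v : ℕ → L) {d : ℕ}
    (b : Fin d → F) (c : F) :
    ∑ i : Fin (d + 1), (Fin.snoc b c : Fin (d + 1) → F) i • v i = ∑ i, b i • v i + c • v d := by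
  simp [Fin.sum_univ_castSucc]

section CompleteHomogeneous

variable {L : Type*} [CommRing L] (x : ℕ → L)

/-- The complete homogeneous symmetric polynomial of degree `k` in `x 0, …, x d`. -/
def completeHomog : ℕ → ℕ → L
  | 0, k => x 0 ^ k
  | _ + 1, 0 => 1
  | d + 1, k + 1 => completeHomog d (k + 1) + x (d + 1) * completeHomog (d + 1) k

lemma completeHomog_zero_left (k : ℕ) : completeHomog x 0 k = x 0 ^ k := by
  simp [completeHomog]

lemma completeHomog_zero_right (d : ℕ) : completeHomog x d 0 = 1 := by
  cases d <;> simp [completeHomog]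

lemma completeHomog_succ_succ (d k : ℕ) : completeHomog x (d + 1) (k + 1)
    = completeHomog x d (k + 1) + x (d + 1) * completeHomog x (d + 1) k := by
  simp [completeHomog]

end CompleteHomogeneous

section FiniteField

variable {F : Type*} [Fintype F]

local notation "q" => Fintype.card F

lemma pow_card_sub_one_mul [Nonempty F] {M : Type*} [Monoid M] (x : M) :
    x ^ (q - 1) * x = x ^ q := by
  rw [← pow_succ, Nat.sub_add_cancel Fintype.card_pos]

lemma pow_card_pow_succ {M : Type*} [Monoid M] (t : M) (i : ℕ) :
    t ^ q ^ (i + 1) = (t ^ q ^ i) ^ q := by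
  rw [pow_succ, pow_mul]

variable (F) in
def ell {L : Type*} [CommRing L] (t : L) (d : ℕ) : L :=
  ∏ i ∈ Finset.range d, (t - t ^ q ^ (i + 1))

lemma ell_succ {L : Type*} [CommRing L] (t : L) (d : ℕ) :
    ell F t (d + 1) = ell F t d * (t - t ^ q ^ (d + 1)) :=
  Finset.prod_range_succ _ _

end FiniteField

section FiniteFieldAlgebra

variable {F L : Type*} [Field F] [Fintype F] [Field L] [Algebra F L]

local notation "q" => Fintype.card F

lemma add_pow_card (x y : L) : (x + y) ^ q = x ^ q + y ^ q :=
  map_add (FiniteField.frobeniusAlgHom F L) x y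

lemma sub_pow_card (x y : L) : (x - y) ^ q = x ^ q - y ^ q :=
  map_sub (FiniteField.frobeniusAlgHom F L) x y

lemma smul_pow_card (c : F) (x : L) : (c • x) ^ q = c • x ^ q :=
  map_smul (FiniteField.frobeniusAlgHom F L) c x

lemma algebraMap_pow_card (c : F) : algebraMap F L c ^ q = algebraMap F L c := by
  rw [← map_pow, FiniteField.pow_card]

variable (F) in
lemma prod_X_sub_C_eq_X_pow_card_sub_X : ∏ c : F, (X - C c) = X ^ q - X := by
  have hroots := FiniteField.roots_X_pow_card_sub_X F
  have hcard : (X ^ q - X : F[X]).roots.card = (X ^ q - X : F[X]).natDegree := by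
    rw [hroots, FiniteField.X_pow_card_sub_X_natDegree_eq F Fintype.one_lt_card]
    rfl
  have hmonic : (X ^ q - X : F[X]).Monic :=
    monic_X_pow_sub (by rw [degree_X]; exact_mod_cast Fintype.one_lt_card)
  rw [← prod_multiset_X_sub_C_of_monic_of_roots_card_eq hmonic hcard, hroots]
  rfl

lemma prod_sub_algebraMap (z : L) : ∏ c : F, (z - algebraMap F L c) = z ^ q - z := by
  simpa [map_prod] using congrArg (aeval z) (prod_X_sub_C_eq_X_pow_card_sub_X F)

lemma prod_sub_smul (z u : L) : ∏ c : F, (z - c • u) = z ^ q - u ^ (q - 1) * z := by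
  rcases eq_or_ne u 0 with rfl | hu
  · simp [Finset.card_univ, zero_pow (Nat.sub_ne_zero_of_lt Fintype.one_lt_card)]
  have hfactor : ∀ c : F, z - c • u = u * (z / u - algebraMap F L c) := fun c => by
    rw [Algebra.smul_def]; field_simp
  rw [Fintype.prod_congr _ _ hfactor, Finset.prod_mul_distrib, Finset.prod_const,
    Finset.card_univ, prod_sub_algebraMap]
  have hdiv : (z / u) ^ q = z ^ q / (u ^ (q - 1) * u) := by rw [div_pow, pow_card_sub_one_mul]
  rw [hdiv, ← pow_card_sub_one_mul (x := u)]
  field_simp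

variable (F) in
lemma sum_pow_card_sub_one : ∑ c : F, c ^ (q - 1) = -1 := by
  classical
  have h : ∀ c : F, c ^ (q - 1) = if c = 0 then 0 else 1 := fun c => by
    split_ifs with hc
    · rw [hc, zero_pow (Nat.sub_ne_zero_of_lt Fintype.one_lt_card)]
    · exact FiniteField.pow_card_sub_one_eq_one c hc
  simp only [h, Finset.sum_ite, Finset.sum_const_zero, Finset.sum_const, zero_add, nsmul_one,
    Finset.filter_ne', Finset.card_erase_of_mem (Finset.mem_univ _), Finset.card_univ]
  rw [Nat.cast_sub Fintype.card_pos, FiniteField.cast_card_eq_zero, Nat.cast_one, zero_sub]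

lemma sum_sub_algebraMap_pow (z : L) {m : ℕ} (hm : m < q) :
    ∑ c : F, (z - algebraMap F L c) ^ m = algebraMap F L (∑ c : F, c ^ m) := by
  have hneg : ∑ c : F, (z - algebraMap F L c) ^ m = ∑ c : F, (algebraMap F L c + z) ^ m := by
    rw [← Equiv.sum_comp (Equiv.neg F)]
    simp [sub_eq_add_neg, add_comm]
  have hlow : ∀ k < m, ∑ c : F, algebraMap F L c ^ k = 0 := fun k hk => by
    simp_rw [← map_pow, ← map_sum, FiniteField.sum_pow_lt_card_sub_one F k (by omega), map_zero]
  rw [hneg]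
  simp_rw [add_pow]
  rw [Finset.sum_comm]
  simp_rw [← Finset.sum_mul]
  rw [Finset.sum_range_succ, Finset.sum_eq_zero fun k hk => by
    rw [hlow k (Finset.mem_range.mp hk), zero_mul, zero_mul]]
  simp [map_sum]

lemma natCast_card_eq_zero : (q : L) = 0 := by
  rw [← map_natCast (algebraMap F L), FiniteField.cast_card_eq_zero, map_zero]

lemma mul_sum_inv_sub_algebraMap_pow {z : L} (hz : z ^ q - z ≠ 0) {s : ℕ} (hs₁ : 1 ≤ s)
    (hs : s ≤ q) :
    (z ^ q - z) * ∑ c : F, ((z - algebraMap F L c)⁻¹) ^ s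
      = algebraMap F L (∑ c : F, c ^ (q - s)) - ∑ c : F, ((z - algebraMap F L c)⁻¹) ^ (s - 1) := by
  rw [← sum_sub_algebraMap_pow z (by omega : q - s < q), Finset.mul_sum, ← Finset.sum_sub_distrib]
  refine Fintype.sum_congr _ _ fun c => ?_
  have hw : z - algebraMap F L c ≠ 0 := by
    rw [← prod_sub_algebraMap] at hz
    exact Finset.prod_ne_zero_iff.mp hz c (Finset.mem_univ c)
  have hfrob : z ^ q - z = (z - algebraMap F L c) ^ q - (z - algebraMap F L c) := by
    rw [sub_pow_card, algebraMap_pow_card]; ring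
  rw [hfrob]
  obtain ⟨a, rfl⟩ : ∃ a, s = a + 1 := ⟨s - 1, by omega⟩
  obtain ⟨b, hb⟩ : ∃ b, q = b + (a + 1) := ⟨q - (a + 1), by omega⟩
  rw [hb, Nat.add_sub_cancel, Nat.add_sub_cancel]
  generalize z - algebraMap F L c = w at hw ⊢
  rw [inv_pow, inv_pow]
  field_simp
  ring

lemma sum_inv_sub_algebraMap_pow {z : L} (hz : z ^ q - z ≠ 0) {s : ℕ} (hs₁ : 1 ≤ s)
    (hs : s ≤ q) : ∑ c : F, ((z - algebraMap F L c)⁻¹) ^ s = (-(z ^ q - z)⁻¹) ^ s := by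
  induction s, hs₁ using Nat.le_induction with
  | base =>
    have h := mul_sum_inv_sub_algebraMap_pow hz le_rfl hs
    simp only [sum_pow_card_sub_one, map_neg, map_one, Nat.sub_self, pow_zero,
      Finset.sum_const, Finset.card_univ, nsmul_one, natCast_card_eq_zero, sub_zero] at h
    set S := ∑ c : F, ((z - algebraMap F L c)⁻¹) ^ 1
    field_simp
    linear_combination h
  | succ s hs₁ ih =>
    have h := mul_sum_inv_sub_algebraMap_pow hz (by omega) hs
    rw [FiniteField.sum_pow_lt_card_sub_one F _ (by omega), map_zero, zero_sub,
      Nat.add_sub_cancel, ih (by omega)] at h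
    set S := ∑ c : F, ((z - algebraMap F L c)⁻¹) ^ (s + 1)
    rw [pow_succ]
    field_simp
    linear_combination h

lemma sum_inv_sub_smul_pow {y u : L} (hu : u ≠ 0) (hy : y ^ q - u ^ (q - 1) * y ≠ 0) {s : ℕ}
    (hs₁ : 1 ≤ s) (hs : s ≤ q) :
    ∑ c : F, ((y - c • u)⁻¹) ^ s = (-u ^ (q - 1) / (y ^ q - u ^ (q - 1) * y)) ^ s := by
  have hz : (y / u) ^ q - y / u = (y ^ q - u ^ (q - 1) * y) / (u ^ (q - 1) * u) := by
    rw [div_pow, ← pow_card_sub_one_mul (x := u)]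
    field_simp
  have hfactor : ∀ c : F, ((y - c • u)⁻¹) ^ s = (u⁻¹) ^ s * ((y / u - algebraMap F L c)⁻¹) ^ s :=
    fun c => by rw [← mul_pow, ← mul_inv, mul_sub, mul_div_cancel₀ _ hu, Algebra.smul_def,
      mul_comm u]
  rw [Fintype.sum_congr _ _ hfactor, ← Finset.mul_sum, sum_inv_sub_algebraMap_pow
    (by rw [hz]; exact div_ne_zero hy (by positivity)) hs₁ hs, ← mul_pow, hz]
  congr 1
  field_simp

/-- Frobenius shifts `x i` to `x (i + 1)`, so `h^q - h` is a difference of complete homogeneous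
polynomials in two variable sets overlapping in `x 1, …, x d`. -/
lemma completeHomog_pow_card_sub {x : ℕ → L} (hx : ∀ i, x (i + 1) = x i ^ q) (d k : ℕ) :
    completeHomog x d (k + 1) ^ q - completeHomog x d (k + 1)
      = (x (d + 1) - x 0) * completeHomog x (d + 1) k := by
  induction d generalizing k with
  | zero =>
    induction k with
    | zero => simp [completeHomog_zero_left, completeHomog_zero_right, hx]
    | succ m ih =>
      have hfrob : ∀ j, (x 0 ^ j) ^ q = x 1 ^ j := fun j => by rw [pow_right_comm, ← hx 0]
      rw [completeHomog_succ_succ]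
      simp only [zero_add, completeHomog_zero_left, hfrob] at ih ⊢
      linear_combination x 1 * ih
  | succ d ihd =>
    induction k with
    | zero =>
      have h := ihd 0
      simp only [completeHomog_succ_succ, completeHomog_zero_right, zero_add, mul_one,
        add_pow_card, ← hx] at h ⊢
      linear_combination h
    | succ m ihm =>
      rw [completeHomog_succ_succ x d (m + 1), completeHomog_succ_succ x (d + 1) m, add_pow_card,
        mul_pow, ← hx]
      linear_combination ihd (m + 1) + x (d + 1 + 1) * ihm

variable (F) in
/-- Carlitz's `e_V (y)`, for `V` the `F`-span of `v 0, …, v (d - 1)`. -/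
noncomputable def spanProd (v : ℕ → L) (d : ℕ) (y : L) : L :=
  ∏ b : Fin d → F, (y - ∑ i, b i • v i)

variable (v : ℕ → L)

lemma spanProd_zero (y : L) : spanProd F v 0 y = y := by
  simp [spanProd]

lemma spanProd_succ_eq_prod (d : ℕ) (y : L) :
    spanProd F v (d + 1) y = ∏ c : F, spanProd F v d (y - c • v d) := by
  rw [spanProd, prod_pi_fin_succ]
  simp only [sum_snoc_smul, spanProd, sub_add_eq_sub_sub_swap]

lemma spanProd_succ_of_isLinearMap {d : ℕ} (hd : IsLinearMap F (spanProd F v d)) (y : L) :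
    spanProd F v (d + 1) y
      = spanProd F v d y ^ q - spanProd F v d (v d) ^ (q - 1) * spanProd F v d y := by
  simp only [spanProd_succ_eq_prod, hd.map_sub, hd.map_smul, prod_sub_smul]

lemma isLinearMap_spanProd (d : ℕ) : IsLinearMap F (spanProd F v d) := by
  induction d with
  | zero => exact ⟨by simp [spanProd_zero], by simp [spanProd_zero]⟩
  | succ d ih =>
    refine ⟨fun x y => ?_, fun c x => ?_⟩
    · simp only [spanProd_succ_of_isLinearMap v ih, ih.map_add, add_pow_card]
      ring
    · simp only [spanProd_succ_of_isLinearMap v ih, ih.map_smul, smul_pow_card, smul_sub,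
        mul_smul_comm]

lemma spanProd_succ (d : ℕ) (y : L) :
    spanProd F v (d + 1) y
      = spanProd F v d y ^ q - spanProd F v d (v d) ^ (q - 1) * spanProd F v d y :=
  spanProd_succ_of_isLinearMap v (isLinearMap_spanProd v d) y

variable (F) in
noncomputable def spanConst : ℕ → L
  | 0 => 1
  | d + 1 => -spanConst d * spanProd F v d (v d) ^ (q - 1)

lemma sum_inv_sub_span_pow {s : ℕ} (hs₁ : 1 ≤ s) (hs : s ≤ q) {d : ℕ}
    (hv : ∀ j < d, spanProd F v j (v j) ≠ 0) {y : L} (hy : spanProd F v d y ≠ 0) :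
    ∑ b : Fin d → F, ((y - ∑ i, b i • v i)⁻¹) ^ s = (spanConst F v d / spanProd F v d y) ^ s := by
  induction d generalizing y with
  | zero => simp [spanProd_zero, spanConst]
  | succ d ih =>
    have hfactor : ∀ c : F, spanProd F v d (y - c • v d) ≠ 0 := by
      rw [spanProd_succ_eq_prod] at hy
      exact fun c => Finset.prod_ne_zero_iff.mp hy c (Finset.mem_univ c)
    have hlin := isLinearMap_spanProd (F := F) v d
    rw [sum_pi_fin_succ]
    simp only [sum_snoc_smul, sub_add_eq_sub_sub_swap]
    rw [Fintype.sum_congr _ _ fun c => ih (fun j hj => hv j (by omega)) (hfactor c)]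
    simp only [hlin.map_sub, hlin.map_smul, div_eq_mul_inv (spanConst F v d), mul_pow]
    rw [← Finset.mul_sum, sum_inv_sub_smul_pow (hv d d.lt_succ_self)
      (by rwa [← spanProd_succ]) hs₁ hs, ← spanProd_succ, ← mul_pow, spanConst]
    ring

variable {t : L}

lemma spanProd_succ_pow_add {d : ℕ} (hd : ∀ k, spanProd F (t ^ ·) d (t ^ (d + k))
      = spanProd F (t ^ ·) d (t ^ d) * completeHomog (fun i => t ^ q ^ i) d k) (k : ℕ) :
    spanProd F (t ^ ·) (d + 1) (t ^ (d + 1 + k)) = spanProd F (t ^ ·) d (t ^ d) ^ q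
      * (t ^ q ^ (d + 1) - t) * completeHomog (fun i => t ^ q ^ i) (d + 1) k := by
  have hfrob :=
    completeHomog_pow_card_sub (x := fun i => t ^ q ^ i) (pow_card_pow_succ (F := F) t) d k
  rw [spanProd_succ, add_right_comm, add_assoc, hd, mul_pow, ← pow_card_sub_one_mul]
  simp only [pow_zero, pow_one] at hfrob
  linear_combination spanProd F (t ^ ·) d (t ^ d) ^ (q - 1) * spanProd F (t ^ ·) d (t ^ d) * hfrob

lemma spanProd_pow_add (d k : ℕ) : spanProd F (t ^ ·) d (t ^ (d + k))
    = spanProd F (t ^ ·) d (t ^ d) * completeHomog (fun i => t ^ q ^ i) d k := by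
  induction d generalizing k with
  | zero => simp [spanProd_zero, completeHomog_zero_left]
  | succ d ih =>
    have h0 := spanProd_succ_pow_add ih 0
    rw [add_zero, completeHomog_zero_right, mul_one] at h0
    rw [spanProd_succ_pow_add ih, h0]

lemma spanProd_pow_succ_self (d : ℕ) : spanProd F (t ^ ·) (d + 1) (t ^ (d + 1))
    = spanProd F (t ^ ·) d (t ^ d) ^ q * (t ^ q ^ (d + 1) - t) := by
  simpa [completeHomog_zero_right] using
    spanProd_succ_pow_add (spanProd_pow_add (F := F) (t := t) d) 0

lemma spanProd_pow_self_ne_zero (ht : ∀ i, t ^ q ^ (i + 1) ≠ t) (d : ℕ) :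
    spanProd F (t ^ ·) d (t ^ d) ≠ 0 := by
  induction d with
  | zero => simp [spanProd_zero]
  | succ d ih =>
    rw [spanProd_pow_succ_self]
    exact mul_ne_zero (pow_ne_zero _ ih) (sub_ne_zero.mpr (ht d))

lemma spanConst_div_spanProd_pow_self (ht : ∀ i, t ^ q ^ (i + 1) ≠ t) (d : ℕ) :
    spanConst F (t ^ ·) d / spanProd F (t ^ ·) d (t ^ d) = (ell F t d)⁻¹ := by
  induction d with
  | zero => simp [spanConst, spanProd_zero, ell]
  | succ d ih =>
    have hw := spanProd_pow_self_ne_zero ht d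
    have hδ : t - t ^ q ^ (d + 1) ≠ 0 := sub_ne_zero.mpr (ht d).symm
    rw [spanConst, spanProd_pow_succ_self, ell_succ, mul_inv, ← ih,
      ← pow_card_sub_one_mul (x := spanProd F (t ^ ·) d (t ^ d))]
    generalize spanProd F (t ^ ·) d (t ^ d) = w at hw ⊢
    generalize t ^ q ^ (d + 1) = x at hδ ⊢
    have hδ' : x - t ≠ 0 := fun h => hδ (by linear_combination -h)
    field_simp
    ring

lemma sum_inv_pow_add_span (ht : ∀ i, t ^ q ^ (i + 1) ≠ t) {s : ℕ} (hs₁ : 1 ≤ s) (hs : s ≤ q)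
    (d : ℕ) :
    ∑ b : Fin d → F, ((t ^ d + ∑ i, b i • t ^ (i : ℕ))⁻¹) ^ s = ((ell F t d)⁻¹) ^ s := by
  rw [← Equiv.sum_comp (Equiv.neg _)]
  simp only [Equiv.neg_apply, Pi.neg_apply, neg_smul, Finset.sum_neg_distrib, ← sub_eq_add_neg]
  rw [sum_inv_sub_span_pow _ hs₁ hs (fun j _ => spanProd_pow_self_ne_zero ht j)
    (spanProd_pow_self_ne_zero ht d), spanConst_div_spanProd_pow_self ht]

lemma mul_sum_inv_ell_pow (ht : ∀ i, t ^ q ^ (i + 1) ≠ t) (d : ℕ) :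
    (t ^ q - t) * ∑ j ∈ Finset.range (d + 1), ((ell F t j)⁻¹) ^ (q - 1)
      = ((ell F t d)⁻¹) ^ (q - 1) * (t ^ q ^ (d + 1) - t) := by
  induction d with
  | zero => simp [ell]
  | succ d ih =>
    have hδ : t - t ^ q ^ (d + 1) ≠ 0 := sub_ne_zero.mpr (ht d).symm
    have hell : (ell F t d)⁻¹ = (ell F t (d + 1))⁻¹ * (t - t ^ q ^ (d + 1)) := by
      rw [ell_succ, mul_inv, mul_assoc, inv_mul_cancel₀ hδ, mul_one]
    have hfrob : (t - t ^ q ^ (d + 1)) ^ q = t ^ q - t ^ q ^ (d + 2) := by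
      rw [sub_pow_card, ← pow_card_pow_succ (F := F)]
    rw [Finset.sum_range_succ, mul_add, ih, hell, mul_pow]
    linear_combination (-((ell F t (d + 1))⁻¹ ^ (q - 1)))
      * (pow_card_sub_one_mul (F := F) (x := t - t ^ q ^ (d + 1)) + hfrob)

lemma ell_inv_pow_card_add_mul_sum_eq_zero (ht : ∀ i, t ^ q ^ (i + 1) ≠ t) (d : ℕ) :
    ((ell F t d)⁻¹) ^ q + (t ^ q - t)
      * ((ell F t (d + 1))⁻¹ * ∑ j ∈ Finset.range (d + 1), ((ell F t j)⁻¹) ^ (q - 1)) = 0 := by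
  have hδ : t - t ^ q ^ (d + 1) ≠ 0 := sub_ne_zero.mpr (ht d).symm
  rw [mul_left_comm, mul_sum_inv_ell_pow ht, ell_succ, mul_inv, ← pow_card_sub_one_mul (F := F)]
  generalize (ell F t d)⁻¹ = ℓ
  generalize t ^ q ^ (d + 1) = x at hδ ⊢
  field_simp
  ring

end FiniteFieldAlgebra

section MonicPolynomials

variable {F : Type*} [Field F] [Fintype F]

local notation "q" => Fintype.card F

variable (F) in
noncomputable def monicEquiv (d : ℕ) : (Fin d → F) ≃ {p : F[X] // p.Monic ∧ p.natDegree = d} :=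
  ((monicEquivDegreeLT d).trans (degreeLTEquiv F d).toEquiv).symm

omit [Fintype F] in
lemma range_coe_monicEquiv (d : ℕ) :
    Set.range (fun b => (monicEquiv F d b : F[X])) = {a : F[X] | a.Monic ∧ a.natDegree = d} := by
  rw [← Subtype.range_coe_subtype]
  exact (monicEquiv F d).surjective.range_comp Subtype.val

lemma finite_setOf_monic_natDegree_eq (d : ℕ) :
    {a : F[X] | a.Monic ∧ a.natDegree = d}.Finite :=
  range_coe_monicEquiv (F := F) d ▸ Set.finite_range _

lemma finsum_mem_monic_natDegree_eq {M : Type*} [AddCommMonoid M] (d : ℕ) (f : F[X] → M) :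
    ∑ᶠ a ∈ {a : F[X] | a.Monic ∧ a.natDegree = d}, f a
      = ∑ b : Fin d → F, f (X ^ d + ∑ i : Fin d, monomial (i : ℕ) (b i)) := by
  rw [← range_coe_monicEquiv, finsum_mem_range fun b b' h => (monicEquiv F d).injective
    (Subtype.ext h), finsum_eq_sum_of_fintype]
  rfl

omit [Fintype F] in
lemma setOf_monic_natDegree_lt_eq_iUnion (n : ℕ) : {a : F[X] | a.Monic ∧ a.natDegree < n}
    = ⋃ j : Fin n, {a : F[X] | a.Monic ∧ a.natDegree = j} := by
  ext a
  simp only [Set.mem_ofPred_eq, Set.mem_iUnion]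
  exact ⟨fun ⟨hm, hn⟩ => ⟨⟨_, hn⟩, hm, rfl⟩, fun ⟨j, hm, hj⟩ => ⟨hm, hj ▸ j.isLt⟩⟩

lemma finite_setOf_monic_natDegree_lt (n : ℕ) :
    {a : F[X] | a.Monic ∧ a.natDegree < n}.Finite := by
  rw [setOf_monic_natDegree_lt_eq_iUnion]
  exact Set.finite_iUnion fun j => finite_setOf_monic_natDegree_eq j

lemma finsum_mem_monic_natDegree_lt {M : Type*} [AddCommMonoid M] (n : ℕ) (f : F[X] → M) :
    ∑ᶠ a ∈ {a : F[X] | a.Monic ∧ a.natDegree < n}, f a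
      = ∑ j ∈ Finset.range n, ∑ᶠ a ∈ {a : F[X] | a.Monic ∧ a.natDegree = j}, f a := by
  rw [setOf_monic_natDegree_lt_eq_iUnion, finsum_mem_iUnion, finsum_eq_sum_of_fintype,
    Fin.sum_univ_eq_sum_range (fun j => ∑ᶠ a ∈ {a : F[X] | a.Monic ∧ a.natDegree = j}, f a)]
  · intro i j hij
    exact Set.disjoint_left.mpr fun a hi hj => hij (Fin.ext (hi.2.symm.trans hj.2))
  · exact fun j => finite_setOf_monic_natDegree_eq j

lemma finsum_mem_monic_pair_mul {R : Type*} [CommSemiring R] (n : ℕ) (f g : F[X] → R) :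
    ∑ᶠ a ∈ {a : F[X] × F[X] | a.1.Monic ∧ a.2.Monic ∧ a.1.natDegree = n ∧ a.2.natDegree < n},
        f a.1 * g a.2
      = (∑ᶠ a ∈ {a : F[X] | a.Monic ∧ a.natDegree = n}, f a)
        * ∑ j ∈ Finset.range n, ∑ᶠ a ∈ {a : F[X] | a.Monic ∧ a.natDegree = j}, g a := by
  have hprod : {a : F[X] × F[X] | a.1.Monic ∧ a.2.Monic ∧ a.1.natDegree = n ∧ a.2.natDegree < n}
      = {a : F[X] | a.Monic ∧ a.natDegree = n} ×ˢ {a : F[X] | a.Monic ∧ a.natDegree < n} := by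
    ext
    simp only [Set.mem_prod, Set.mem_ofPred_eq]
    tauto
  rw [hprod, finsum_mem_prod_mul (finite_setOf_monic_natDegree_eq n)
    (finite_setOf_monic_natDegree_lt n), finsum_mem_monic_natDegree_lt]

lemma algebraMap_X_pow_card_pow_ne (i : ℕ) :
    algebraMap F[X] (RatFunc F) X ^ q ^ (i + 1) ≠ algebraMap F[X] (RatFunc F) X := by
  rw [ne_eq, ← sub_eq_zero, ← map_pow, ← map_sub,
    map_eq_zero_iff _ (RatFunc.algebraMap_injective F)]
  exact FiniteField.X_pow_card_pow_sub_X_ne_zero F i.succ_ne_zero Fintype.one_lt_card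

lemma finsum_mem_monic_inv_pow {s : ℕ} (hs₁ : 1 ≤ s) (hs : s ≤ q) (d : ℕ) :
    ∑ᶠ a ∈ {a : F[X] | a.Monic ∧ a.natDegree = d}, ((algebraMap F[X] (RatFunc F) a)⁻¹) ^ s
      = ((ell F (algebraMap F[X] (RatFunc F) X) d)⁻¹) ^ s := by
  have hmonomial : ∀ (i : ℕ) (c : F), algebraMap F[X] (RatFunc F) (monomial i c)
      = c • algebraMap F[X] (RatFunc F) X ^ i := fun i c => by
    rw [← C_mul_X_pow_eq_monomial, map_mul, map_pow, Algebra.smul_def,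
      IsScalarTower.algebraMap_apply F F[X] (RatFunc F), Polynomial.algebraMap_eq]
  simp only [finsum_mem_monic_natDegree_eq, map_add, map_sum, map_pow, hmonomial]
  exact sum_inv_pow_add_span algebraMap_X_pow_card_pow_ne hs₁ hs d

end MonicPolynomials

end CarlitzPowerSums

open CarlitzPowerSums in
/-- Let `A = F_q[θ]`, `D_1 = θ^q - θ`.  For every `ε ∈ F_q^×` and `d ≥ 0`,
`S_d(ε; q) + ε⁻¹ D_1 S_{d+1}(ε, 1; 1, q-1) = 0`, where
`S_d(ε; q) = ∑_{a monic, deg a = d} ε^d a^{-q}` and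
`S_{d+1}(ε, 1; 1, q-1) = ∑ ε^{deg a_1} / (a_1 a_2^{q-1})` over monic
`a_1, a_2` with `d + 1 = deg a_1 > deg a_2 ≥ 0`; the sums are finite sums in
`K = F_q(θ)`. -/
theorem stmt14 {F : Type*} [Field F] [Fintype F] (ε : Fˣ) (d : ℕ) :
    (∑ᶠ a ∈ {a : Polynomial F | a.Monic ∧ a.natDegree = d},
        algebraMap F (RatFunc F) ((ε : F) ^ d) *
          ((algebraMap (Polynomial F) (RatFunc F) a)⁻¹) ^ Fintype.card F) +
      (algebraMap F (RatFunc F) (ε : F))⁻¹ *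
        algebraMap (Polynomial F) (RatFunc F)
          (Polynomial.X ^ Fintype.card F - Polynomial.X) *
        ∑ᶠ a ∈ {a : Polynomial F × Polynomial F |
            a.1.Monic ∧ a.2.Monic ∧ a.1.natDegree = d + 1 ∧ a.2.natDegree < d + 1},
          algebraMap F (RatFunc F) ((ε : F) ^ (d + 1)) *
            (algebraMap (Polynomial F) (RatFunc F) a.1)⁻¹ *
            ((algebraMap (Polynomial F) (RatFunc F) a.2)⁻¹) ^ (Fintype.card F - 1) = 0 := by
  have hq : 1 < Fintype.card F := Fintype.one_lt_card
  have hε : (algebraMap F (RatFunc F) ε)⁻¹ * algebraMap F (RatFunc F) ((ε : F) ^ (d + 1))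
      = algebraMap F (RatFunc F) ((ε : F) ^ d) := by
    rw [pow_succ', map_mul, inv_mul_cancel_left₀ (by simp)]
  have hS₁ : ∑ᶠ a ∈ {a : F[X] | a.Monic ∧ a.natDegree = d + 1}, (algebraMap F[X] (RatFunc F) a)⁻¹
      = (ell F (algebraMap F[X] (RatFunc F) X) (d + 1))⁻¹ := by
    simpa only [pow_one] using finsum_mem_monic_inv_pow le_rfl hq.le (d + 1)
  rw [finsum_mem_monic_pair_mul (d + 1)
      (fun a => algebraMap F (RatFunc F) ((ε : F) ^ (d + 1)) * (algebraMap F[X] (RatFunc F) a)⁻¹)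
      (fun a => ((algebraMap F[X] (RatFunc F) a)⁻¹) ^ (Fintype.card F - 1)),
    ← mul_finsum_mem, ← mul_finsum_mem, finsum_mem_monic_inv_pow hq.le le_rfl, hS₁,
    Finset.sum_congr rfl fun j _ => finsum_mem_monic_inv_pow (by omega) (by omega) j,
    map_sub, map_pow (algebraMap F[X] (RatFunc F)), ← hε]
  linear_combination (algebraMap F (RatFunc F) ε)⁻¹ * algebraMap F (RatFunc F) ((ε : F) ^ (d + 1))
    * ell_inv_pow_card_add_mul_sum_eq_zero (algebraMap_X_pow_card_pow_ne (F := F)) d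
end

section
/- Fix q ≥ 2. For every weight w ≥ 1, the number of tuples (s_1,…,s_n) of positive integers of weight w with q ∤ s_i for all i equals d(w), where d(0)=1, d(w)=2^{w−1} for 1 ≤ w ≤ q−1, d(q)=2^{q−1}−1, and d(w) = ∑_{i=1}^{q} d(w−i) for w > q. -/
/-!
Writing a composition of `w` as its first part `w - i` followed by a composition of `i`, the
number `c w` of compositions of `w` into parts not divisible by `q` satisfies
`c w = ∑_{i < w, q ∤ w - i} c i`. Below `q` no part is excluded, so the partial sums of `c`
double. For `w > q`, the terms with `i < w - q` add up to `c (w - q)` because `q ∣ w - i` iff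
`q ∣ (w - q) - i`, and what remains is `c (w - 1) + ⋯ + c (w - q + 1)`.
-/

open Finset

def compositionsWith (p : ℕ → Prop) [DecidablePred p] : ℕ → Finset (List ℕ)
  | 0 => {[]}
  | n + 1 => ((range (n + 1)).filter fun j => p (j + 1)).biUnion fun j =>
      (compositionsWith p (n - j)).image (List.cons (j + 1))
decreasing_by omega

section compositionsWith

variable (p : ℕ → Prop) [DecidablePred p]

theorem mem_compositionsWith {n : ℕ} {l : List ℕ} :
    l ∈ compositionsWith p n ↔ (∀ x ∈ l, 0 < x) ∧ l.sum = n ∧ ∀ x ∈ l, p x := by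
  induction n using Nat.strong_induction_on generalizing l with | _ n ih =>
  cases n with
  | zero => cases l <;> simp [compositionsWith]; omega
  | succ n =>
    rw [compositionsWith]
    simp only [mem_biUnion, mem_filter, mem_range, mem_image]
    constructor
    · rintro ⟨j, ⟨hj, hpj⟩, t, ht, rfl⟩
      obtain ⟨hpos, hsum, hp⟩ := (ih (n - j) (by omega)).1 ht
      simp only [List.mem_cons, forall_eq_or_imp, List.sum_cons, hsum]
      exact ⟨⟨j.succ_pos, hpos⟩, by omega, hpj, hp⟩
    · rintro ⟨hpos, hsum, hp⟩
      cases l with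
      | nil => simp at hsum
      | cons a t =>
        simp only [List.mem_cons, forall_eq_or_imp, List.sum_cons] at hpos hsum hp
        have ht := (ih (n - (a - 1)) (by omega)).2 ⟨hpos.2, by omega, hp.2⟩
        exact ⟨a - 1, ⟨by omega, Nat.sub_add_cancel hpos.1 ▸ hp.1⟩, t, ht,
          by rw [Nat.sub_add_cancel hpos.1]⟩

theorem card_compositionsWith {n : ℕ} (hn : 0 < n) :
    #(compositionsWith p n) = ∑ i ∈ range n with p (n - i), #(compositionsWith p i) := by
  obtain ⟨n, rfl⟩ : ∃ m, n = m + 1 := ⟨n - 1, by omega⟩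
  rw [compositionsWith, card_biUnion]
  · rw [sum_filter, sum_filter, ← sum_range_reflect]
    refine sum_congr rfl fun j hj => ?_
    rw [mem_range] at hj
    rw [show n + 1 - 1 - j + 1 = n + 1 - j by omega, show n - (n + 1 - 1 - j) = j by omega,
      card_image_of_injective _ List.cons_injective]
  · intro j _ k _ hjk
    simp only [Function.onFun, disjoint_left, mem_image]
    rintro _ ⟨s, -, rfl⟩ ⟨t, -, h⟩
    exact hjk (Nat.succ_injective (List.cons_eq_cons.mp h).1).symm

end compositionsWith

namespace NotDvdRecurrence

variable {q : ℕ} {c : ℕ → ℕ} (hc : ∀ w, 0 < w → c w = ∑ i ∈ range w with ¬ q ∣ w - i, c i)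
include hc

theorem eq_sum_range_of_lt {w : ℕ} (hw₀ : 0 < w) (hw : w < q) : c w = ∑ i ∈ range w, c i := by
  rw [hc w hw₀, filter_true_of_mem]
  intro i hi
  rw [mem_range] at hi
  exact Nat.not_dvd_of_pos_of_lt (by omega) (by omega)

theorem sum_range_succ_eq_two_pow (hc0 : c 0 = 1) {n : ℕ} (hn : n < q) :
    ∑ i ∈ range (n + 1), c i = 2 ^ n := by
  induction n with
  | zero => simp [hc0]
  | succ n ih =>
    rw [sum_range_succ, eq_sum_range_of_lt hc n.succ_pos hn, ih (by omega), pow_succ]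
    ring

theorem eq_two_pow_of_lt (hc0 : c 0 = 1) {w : ℕ} (hw₀ : 0 < w) (hw : w < q) :
    c w = 2 ^ (w - 1) := by
  rw [eq_sum_range_of_lt hc hw₀ hw, ← sum_range_succ_eq_two_pow hc hc0 (by omega : w - 1 < q),
    Nat.sub_add_cancel hw₀]

theorem eq_two_pow_sub_one (hc0 : c 0 = 1) (hq : 0 < q) : c q = 2 ^ (q - 1) - 1 := by
  have hsum := sum_range_succ_eq_two_pow hc hc0 (by omega : q - 1 < q)
  rw [Nat.sub_add_cancel hq, sum_range_eq_add_Ico _ hq, hc0] at hsum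
  rw [hc q hq, sum_filter, sum_range_eq_add_Ico _ hq, if_neg (by simp), zero_add, ← hsum,
    Nat.add_sub_cancel_left]
  refine sum_congr rfl fun i hi => if_pos (Nat.not_dvd_of_pos_of_lt ?_ ?_) <;>
    (rw [mem_Ico] at hi; omega)

theorem eq_sum_Icc_of_lt (hq : 0 < q) {w : ℕ} (hw : q < w) :
    c w = ∑ i ∈ Icc 1 q, c (w - i) := by
  obtain ⟨m, hm, rfl⟩ : ∃ m, 0 < m ∧ w = m + q := ⟨w - q, by omega, by omega⟩
  have hlow : ∑ i ∈ range m with ¬ q ∣ m + q - i, c i = c m := by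
    rw [hc m hm]
    refine sum_congr (filter_congr fun i hi => ?_) fun _ _ => rfl
    rw [mem_range] at hi
    rw [show m + q - i = m - i + q by omega, Nat.dvd_add_self_right]
  calc c (m + q) = ∑ i ∈ range (m + q), if ¬ q ∣ m + q - i then c i else 0 := by
        rw [hc _ (by omega), sum_filter]
    _ = c m + ∑ i ∈ Ico m (m + q), if ¬ q ∣ m + q - i then c i else 0 := by
        rw [← sum_range_add_sum_Ico _ (Nat.le_add_right m q), ← sum_filter, hlow]
    _ = ∑ i ∈ Ico m (m + q), c i := by
        rw [sum_eq_sum_Ico_succ_bot (by omega), sum_eq_sum_Ico_succ_bot (by omega : m < m + q),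
          if_neg (by simp), zero_add]
        refine congrArg _ (sum_congr rfl fun i hi => if_pos (Nat.not_dvd_of_pos_of_lt ?_ ?_)) <;>
          (rw [mem_Ico] at hi; omega)
    _ = ∑ i ∈ Icc 1 q, c (m + q - i) := by
        rw [← Ico_add_one_right_eq_Icc, sum_Ico_reflect _ _ (by omega)]
        rw [show m + q + 1 - (q + 1) = m by omega, Nat.add_sub_cancel]

end NotDvdRecurrence

theorem stmt17_general (q : ℕ) (hq : 2 ≤ q) (d : ℕ → ℕ)
    (hd1 : ∀ w, 1 ≤ w → w ≤ q - 1 → d w = 2 ^ (w - 1))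
    (hdq : d q = 2 ^ (q - 1) - 1)
    (hdrec : ∀ w, q < w → d w = ∑ i ∈ Finset.Icc 1 q, d (w - i)) :
    ∀ w, 1 ≤ w →
      {l : List ℕ | l ≠ [] ∧ (∀ x ∈ l, 0 < x) ∧ l.sum = w ∧
        ∀ x ∈ l, ¬ q ∣ x}.ncard = d w := by
  set c := fun w => #(compositionsWith (¬ q ∣ ·) w)
  have hc : ∀ w, 0 < w → c w = ∑ i ∈ range w with ¬ q ∣ w - i, c i :=
    fun w => card_compositionsWith _
  have hc0 : c 0 = 1 := by simp [c, compositionsWith]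
  have hcd : ∀ w, 1 ≤ w → c w = d w := by
    intro w
    induction w using Nat.strong_induction_on with | _ w ih =>
    intro hw
    rcases lt_trichotomy w q with hwq | rfl | hwq
    · rw [NotDvdRecurrence.eq_two_pow_of_lt hc hc0 hw hwq, hd1 w hw (by omega)]
    · rw [NotDvdRecurrence.eq_two_pow_sub_one hc hc0 hw, hdq]
    · rw [NotDvdRecurrence.eq_sum_Icc_of_lt hc (by omega) hwq, hdrec w hwq]
      refine sum_congr rfl fun i hi => ?_
      rw [mem_Icc] at hi
      exact ih _ (by omega) (by omega)
  intro w hw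
  have hset : {l : List ℕ | l ≠ [] ∧ (∀ x ∈ l, 0 < x) ∧ l.sum = w ∧ ∀ x ∈ l, ¬ q ∣ x}
      = compositionsWith (¬ q ∣ ·) w := by
    ext l
    simp only [Set.mem_ofPred_eq, mem_coe, mem_compositionsWith, and_iff_right_iff_imp]
    rintro ⟨-, rfl, -⟩ rfl
    simp at hw
  rw [hset, Set.ncard_coe_finset, ← hcd w hw]

/-- Fix `q ≥ 2` and let `d : ℕ → ℕ` satisfy `d 0 = 1`, `d w = 2^(w-1)` for
`1 ≤ w ≤ q-1`, `d q = 2^(q-1) - 1`, and `d w = ∑_{i=1}^q d (w-i)` for `w > q`.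
Then for every `w ≥ 1`, the number of tuples `(s_1, …, s_n)` of positive
integers of weight `w` with `q ∤ s_i` for all `i` equals `d w`. -/
theorem stmt17 (q : ℕ) (hq : 2 ≤ q) (d : ℕ → ℕ)
    (hd0 : d 0 = 1)
    (hd1 : ∀ w, 1 ≤ w → w ≤ q - 1 → d w = 2 ^ (w - 1))
    (hdq : d q = 2 ^ (q - 1) - 1)
    (hdrec : ∀ w, q < w → d w = ∑ i ∈ Finset.Icc 1 q, d (w - i)) :
    ∀ w, 1 ≤ w →
      {l : List ℕ | l ≠ [] ∧ (∀ x ∈ l, 0 < x) ∧ l.sum = w ∧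
        ∀ x ∈ l, ¬ q ∣ x}.ncard = d w :=
  stmt17_general q hq d hd1 hdq hdrec
end
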